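/- arXiv:math/0208020 — 2 statements merged into one kernel-verified Lean document; each statement's English description precedes it below -/
import Mathlib

section
/- If S is a finite type with cardinality n, then the fixpoint Y_n of the model-checking iteration equals the full backward reachable set: Y_n = {s | ∃ t ∈ Y₀, ReflTransGen R s t}. -/
def Pre {S : Type*} (R : S → S → Prop) (Y : Set S) : Set S := {s | ∃ t ∈ Y, R s t}

def iter {S : Type*} (R : S → S → Prop) (Y₀ : Set S) : ℕ → Set S
  | 0 => Y₀
  | i + 1 => Pre R (iter R Y₀ i) ∪ iter R Y₀ i

lemma iter_succ_subset {S : Type*} (R : S → S → Prop) (Y₀ : Set S) (i : ℕ) :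
    iter R Y₀ i ⊆ iter R Y₀ (i + 1) := by
  intro s hs; exact Or.inr hs

lemma iter_mono {S : Type*} (R : S → S → Prop) (Y₀ : Set S) {i j : ℕ} (h : i ≤ j) :
    iter R Y₀ i ⊆ iter R Y₀ j := by
  induction j with
  | zero => simp [Nat.le_zero.mp h]
  | succ j ih =>
    rcases Nat.lt_or_ge i (j+1) with h' | h'
    · exact (ih (Nat.lt_succ_iff.mp h')).trans (iter_succ_subset R Y₀ j)
    · have : i = j + 1 := le_antisymm h h'
      simp [this]

lemma iter_stab {S : Type*} (R : S → S → Prop) (Y₀ : Set S) {i : ℕ}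
    (h : iter R Y₀ (i + 1) = iter R Y₀ i) (k : ℕ) : iter R Y₀ (i + k) = iter R Y₀ i := by
  induction k with
  | zero => rfl
  | succ k ih =>
    show Pre R (iter R Y₀ (i + k)) ∪ iter R Y₀ (i + k) = iter R Y₀ i
    rw [ih]
    exact h

theorem stmt4 {S : Type*} [Fintype S] (n : ℕ) (hn : Fintype.card S = n)
    (R : S → S → Prop) (Y₀ : Set S) :
    iter R Y₀ n = {s | ∃ t ∈ Y₀, Relation.ReflTransGen R s t} := by
  -- First: there is a fixpoint by step n
  have hfix : iter R Y₀ (n + 1) = iter R Y₀ n := by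
    by_contra hne
    -- if never fixed up to n, cardinalities grow
    have hstrict : ∀ i ≤ n, iter R Y₀ i ⊂ iter R Y₀ (i + 1) := by
      intro i hi
      refine ⟨iter_succ_subset R Y₀ i, fun hsub => ?_⟩
      have heq : iter R Y₀ (i + 1) = iter R Y₀ i :=
        le_antisymm hsub (iter_succ_subset R Y₀ i)
      have h1 := iter_stab R Y₀ heq (n - i)
      have h2 := iter_stab R Y₀ heq (n + 1 - i)
      rw [Nat.add_sub_cancel' hi] at h1
      rw [Nat.add_sub_cancel' (hi.trans (Nat.le_succ n))] at h2
      exact hne (h2.trans h1.symm)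
    have hcard : ∀ i ≤ n + 1, i ≤ (iter R Y₀ i).ncard := by
      intro i hi
      induction i with
      | zero => exact Nat.zero_le _
      | succ i ih =>
        have hlt := Set.ncard_lt_ncard (hstrict i (Nat.lt_succ_iff.mp hi))
          (Set.toFinite _)
        exact Nat.lt_of_le_of_lt (ih (Nat.le_of_succ_le hi)) hlt
    have := hcard (n + 1) le_rfl
    have hle : (iter R Y₀ (n + 1)).ncard ≤ n := by
      have h := Set.ncard_le_ncard (Set.subset_univ (iter R Y₀ (n+1))) (Set.toFinite _)
      simpa [Set.ncard_univ, Nat.card_eq_fintype_card, hn] using h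
    omega
  ext s
  constructor
  · -- forward: iter i ⊆ reach set, by induction
    have : ∀ i, iter R Y₀ i ⊆ {s | ∃ t ∈ Y₀, Relation.ReflTransGen R s t} := by
      intro i
      induction i with
      | zero => intro s hs; exact ⟨s, hs, Relation.ReflTransGen.refl⟩
      | succ i ih =>
        rintro s (⟨b, hb, hRb⟩ | hs)
        · obtain ⟨t, ht, htr⟩ := ih hb
          exact ⟨t, ht, Relation.ReflTransGen.head hRb htr⟩
        · exact ih hs
    exact fun hs => this n hs
  · rintro ⟨t, ht, htr⟩
    -- s ∈ iter k for some k, then use stability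
    have key : ∃ k, s ∈ iter R Y₀ k := by
      induction htr using Relation.ReflTransGen.head_induction_on with
      | refl => exact ⟨0, ht⟩
      | head hR _ ih =>
        obtain ⟨k, hk⟩ := ih
        exact ⟨k + 1, Or.inl ⟨_, hk, hR⟩⟩
    obtain ⟨k, hk⟩ := key
    rcases Nat.le_total k n with h | h
    · exact iter_mono R Y₀ h hk
    · have := iter_stab R Y₀ hfix (k - n)
      rw [Nat.add_sub_cancel' h] at this
      rw [← this]
      exact hk
end

section
/- Safety criterion of model checking: for a finite state system with initial states I, the condition Y_n ∩ I = ∅ (where n = card S) holds if and only if no execution starting from an initial state ever reaches an error state, i.e., for every s ∈ I and every t with ReflTransGen R s t, t ∉ Y₀. -/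
lemma iter_stable {S : Type*} (R : S → S → Prop) (Y₀ : Set S) {k : ℕ}
    (hk : iter R Y₀ (k + 1) = iter R Y₀ k) {m : ℕ} (hm : k ≤ m) :
    iter R Y₀ m = iter R Y₀ k := by
  induction m with
  | zero => simp [Nat.le_zero.mp hm]
  | succ m ih =>
    rcases Nat.lt_or_ge k (m + 1) with h' | h'
    · have hmk : k ≤ m := Nat.lt_succ_iff.mp h'
      have := ih hmk
      show Pre R (iter R Y₀ m) ∪ iter R Y₀ m = iter R Y₀ k
      rw [this]
      exact hk
    · simp [le_antisymm hm h']

lemma iter_sub_reach {S : Type*} (R : S → S → Prop) (Y₀ : Set S) (i : ℕ) :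
    iter R Y₀ i ⊆ {s | ∃ t ∈ Y₀, Relation.ReflTransGen R s t} := by
  induction i with
  | zero => intro s hs; exact ⟨s, hs, Relation.ReflTransGen.refl⟩
  | succ i ih =>
    rintro s (⟨u, hu, hsu⟩ | hs)
    · obtain ⟨t, ht, hut⟩ := ih hu
      exact ⟨t, ht, Relation.ReflTransGen.head hsu hut⟩
    · exact ih hs

lemma exists_stable {S : Type*} [Fintype S] (n : ℕ) (hn : Fintype.card S = n)
    (R : S → S → Prop) (Y₀ : Set S) :
    ∃ k ≤ n, iter R Y₀ (k + 1) = iter R Y₀ k := by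
  by_contra h
  push_neg at h
  have key : ∀ i ≤ n + 1, i ≤ (iter R Y₀ i).ncard := by
    intro i hi
    induction i with
    | zero => simp
    | succ i ih =>
      have hi' : i ≤ n := Nat.lt_succ_iff.mp hi
      have hne := h i hi'
      have hss : iter R Y₀ i ⊂ iter R Y₀ (i + 1) :=
        ssubset_of_subset_of_ne (iter_succ_subset R Y₀ i) (Ne.symm hne)
      have := Set.ncard_lt_ncard hss (Set.toFinite _)
      omega
  have h1 := key (n + 1) le_rfl
  have h2 : (iter R Y₀ (n + 1)).ncard ≤ n := by
    have := Set.ncard_le_ncard (Set.subset_univ (iter R Y₀ (n + 1))) (Set.toFinite _)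
    simpa [Set.ncard_univ, hn] using this
  omega

lemma reach_sub_iter {S : Type*} [Fintype S] (n : ℕ) (hn : Fintype.card S = n)
    (R : S → S → Prop) (Y₀ : Set S) {s t : S} (ht : t ∈ Y₀)
    (hst : Relation.ReflTransGen R s t) : s ∈ iter R Y₀ n := by
  obtain ⟨k, hkn, hk⟩ := exists_stable n hn R Y₀
  have hm : ∃ m, s ∈ iter R Y₀ m := by
    induction hst using Relation.ReflTransGen.head_induction_on with
    | refl => exact ⟨0, ht⟩
    | head hab _ ih =>
      obtain ⟨m, hm⟩ := ih
      exact ⟨m + 1, Or.inl ⟨_, hm, hab⟩⟩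
  obtain ⟨m, hm⟩ := hm
  rcases le_or_gt m n with h | h
  · exact iter_mono R Y₀ h hm
  · have : iter R Y₀ m = iter R Y₀ k := iter_stable R Y₀ hk (hkn.trans h.le)
    exact iter_mono R Y₀ hkn (this ▸ hm)

theorem stmt5 {S : Type*} [Fintype S] (n : ℕ) (hn : Fintype.card S = n)
    (R : S → S → Prop) (I Y₀ : Set S) :
    iter R Y₀ n ∩ I = ∅ ↔
      ∀ s ∈ I, ∀ t, Relation.ReflTransGen R s t → t ∉ Y₀ := by
  rw [Set.eq_empty_iff_forall_notMem]
  constructor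
  · intro h s hsI t hst htY
    exact h s ⟨reach_sub_iter n hn R Y₀ htY hst, hsI⟩
  · rintro h s ⟨hsn, hsI⟩
    obtain ⟨t, ht, hst⟩ := iter_sub_reach R Y₀ n hsn
    exact h s hsI t hst ht
end
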